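/- arXiv:1612.06767 — 2 statements merged into one kernel-verified Lean document; each statement's English description precedes it below -/
import Mathlib

section
/- For convex bodies K, C in R^n, min{s(K), s(C)} ≥ max{ r(K,−C)/r(K,C), R(K,−C)/R(K,C) }. -/
open Pointwise

/-- A convex body: compact, convex, with nonempty interior. -/
def IsBody {n : ℕ} (K : Set (Fin n → ℝ)) : Prop :=
  Convex ℝ K ∧ IsCompact K ∧ (interior K).Nonempty

/-- Circumradius of `K` w.r.t. `C`: smallest `ρ > 0` with `K` contained in a translate of `ρ • C`. -/
noncomputable def circR {n : ℕ} (K C : Set (Fin n → ℝ)) : ℝ :=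
  sInf {ρ : ℝ | 0 < ρ ∧ ∃ t : Fin n → ℝ, K ⊆ t +ᵥ ρ • C}

/-- Inradius of `K` w.r.t. `C`: largest `ρ ≥ 0` with a translate of `ρ • C` inside `K`. -/
noncomputable def inrad {n : ℕ} (K C : Set (Fin n → ℝ)) : ℝ :=
  sSup {ρ : ℝ | 0 ≤ ρ ∧ ∃ t : Fin n → ℝ, t +ᵥ ρ • C ⊆ K}

/-- Minkowski asymmetry `s(K) = R(-K, K)`. -/
noncomputable def asym {n : ℕ} (K : Set (Fin n → ℝ)) : ℝ := circR (-K) K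

/-- Diameter of `K` w.r.t. `C`: twice the maximal circumradius of a segment with endpoints in `K`. -/
noncomputable def diamC {n : ℕ} (K C : Set (Fin n → ℝ)) : ℝ :=
  sSup {d : ℝ | ∃ x ∈ K, ∃ y ∈ K, d = 2 * circR (segment ℝ x y) C}

/-- `K` is (diametrically) complete w.r.t. `C`. -/
def IsDiamComplete {n : ℕ} (K C : Set (Fin n → ℝ)) : Prop :=
  ∀ K' : Set (Fin n → ℝ), IsBody K' → K ⊂ K' → diamC K C < diamC K' C

/-- `S` is an `n`-simplex: convex hull of `n+1` affinely independent points. -/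
def IsSimplexBody {n : ℕ} (S : Set (Fin n → ℝ)) : Prop :=
  ∃ p : Fin (n + 1) → (Fin n → ℝ), AffineIndependent ℝ p ∧ S = convexHull ℝ (Set.range p)

/-- Support function of `C`. -/
noncomputable def supp {n : ℕ} (C : Set (Fin n → ℝ)) (a : Fin n → ℝ) : ℝ :=
  sSup {r : ℝ | ∃ x ∈ C, r = dotProduct a x}

/-- `A ⊆ₜ B`: `A` is contained in some translate of `B`. -/
def SubsetT {n : ℕ} (A B : Set (Fin n → ℝ)) : Prop := ∃ t : Fin n → ℝ, A ⊆ t +ᵥ B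

/-!
Take `X ∈ {K, C}` and `a > 0` with `-X ⊆ w + a • X`. For `X = C` this says `C ⊆ₜ a • (-C)`,
so every translate of `ρ • C` containing `K` lies in a translate of `a • ρ • (-C)`, and
every translate of `ρ • (-C)` inside `K` contains a translate of `(ρ / a) • C`. For `X = K`
the same two transfers hold after reflecting the configuration through the origin:
`K ⊆ₜ ρ • C` gives `-K ⊆ₜ a • K ⊆ₜ a • ρ • C`, and `ρ • C ⊆ₜ -K ⊆ₜ a • K`. Hence
`R(K, -C) ≤ a R(K, C)` and `r(K, -C) ≤ a r(K, C)`; taking the infimum over `a` bounds both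
ratios by `s(X)`.
-/

open Metric

section

variable {n : ℕ}

namespace SubsetT

variable {A B D : Set (Fin n → ℝ)}

theorem trans (hAB : SubsetT A B) (hBD : SubsetT B D) : SubsetT A D := by
  obtain ⟨t, ht⟩ := hAB
  obtain ⟨u, hu⟩ := hBD
  exact ⟨t + u, ht.trans <| (Set.vadd_set_mono (a := t) hu).trans_eq (vadd_vadd t u D)⟩

theorem smul (h : SubsetT A B) (c : ℝ) : SubsetT (c • A) (c • B) := by
  obtain ⟨t, ht⟩ := h
  refine ⟨c • t, (Set.smul_set_mono ht).trans_eq ?_⟩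
  simp only [← Set.image_smul, ← Set.image_vadd, Set.image_image, vadd_eq_add, smul_add]

theorem neg (h : SubsetT A B) : SubsetT (-A) (-B) := by
  obtain ⟨t, ht⟩ := h
  refine ⟨-t, (Set.neg_subset_neg.2 ht).trans_eq ?_⟩
  simp only [← Set.image_neg_eq_neg, ← Set.image_vadd, Set.image_image, vadd_eq_add, neg_add]

end SubsetT

theorem exists_vadd_subset_iff_subsetT {A B : Set (Fin n → ℝ)} :
    (∃ t : Fin n → ℝ, t +ᵥ A ⊆ B) ↔ SubsetT A B :=
  ⟨fun ⟨t, ht⟩ => ⟨-t, Set.vadd_set_subset_iff_subset_neg_vadd_set.1 ht⟩,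
    fun ⟨t, ht⟩ => ⟨-t, Set.vadd_set_subset_iff_subset_neg_vadd_set.2 (by rwa [neg_neg])⟩⟩

theorem inrad_eq_sSup_subsetT (K C : Set (Fin n → ℝ)) :
    inrad K C = sSup {ρ : ℝ | 0 ≤ ρ ∧ SubsetT (ρ • C) K} := by
  simp only [inrad, exists_vadd_subset_iff_subsetT]

theorem inrad_nonneg (K C : Set (Fin n → ℝ)) : 0 ≤ inrad K C :=
  Real.sSup_nonneg fun _ hρ => hρ.1

theorem circR_nonneg (K C : Set (Fin n → ℝ)) : 0 ≤ circR K C :=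
  Real.sInf_nonneg fun _ hρ => hρ.1.le

theorem nonempty_circR_set {K C : Set (Fin n → ℝ)} (hK : Bornology.IsBounded K)
    (hC : (interior C).Nonempty) : {ρ : ℝ | 0 < ρ ∧ SubsetT K (ρ • C)}.Nonempty := by
  obtain ⟨x, hx⟩ := hC
  obtain ⟨ε, hε, hball⟩ := Metric.mem_nhds_iff.1 (mem_interior_iff_mem_nhds.1 hx)
  obtain ⟨r, hr⟩ := hK.subset_ball 0
  set ρ := max (r / ε) 0 + 1
  have hρ : 0 < ρ := by positivity
  have hrρ : r < ρ * ε := (div_lt_iff₀ hε).1 (lt_of_le_of_lt (le_max_left _ _) (lt_add_one _))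
  refine ⟨ρ, hρ, -(ρ • x), ?_⟩
  calc K ⊆ ball 0 (ρ * ε) := hr.trans (ball_subset_ball hrρ.le)
    _ = -(ρ • x) +ᵥ ρ • ball x ε := by
      rw [_root_.smul_ball hρ.ne', Metric.vadd_ball, vadd_eq_add, neg_add_cancel,
        Real.norm_of_nonneg hρ.le]
    _ ⊆ -(ρ • x) +ᵥ ρ • C := Set.vadd_set_mono (Set.smul_set_mono hball)

theorem circR_le_mul {K C D : Set (Fin n → ℝ)} {a : ℝ} (ha : 0 < a)
    (hne : {ρ : ℝ | 0 < ρ ∧ SubsetT K (ρ • C)}.Nonempty)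
    (h : ∀ b : ℝ, SubsetT K (b • C) → SubsetT K ((a * b) • D)) :
    circR K D ≤ a * circR K C := by
  have hsub : a • {ρ : ℝ | 0 < ρ ∧ SubsetT K (ρ • C)} ⊆ {ρ : ℝ | 0 < ρ ∧ SubsetT K (ρ • D)} := by
    rintro _ ⟨b, ⟨hb, hKC⟩, rfl⟩
    exact ⟨mul_pos ha hb, h b hKC⟩
  calc circR K D ≤ sInf (a • {ρ : ℝ | 0 < ρ ∧ SubsetT K (ρ • C)}) :=
        csInf_le_csInf ⟨0, fun _ hρ => hρ.1.le⟩ hne.smul_set hsub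
    _ = a * circR K C := by rw [Real.sInf_smul_of_nonneg ha.le, smul_eq_mul]; rfl

theorem inrad_le_mul {K C D : Set (Fin n → ℝ)} {a : ℝ} (ha : 0 < a) (hpos : 0 < inrad K C)
    (h : ∀ ρ : ℝ, SubsetT (ρ • D) K → SubsetT ((ρ / a) • C) K) :
    inrad K D ≤ a * inrad K C := by
  rw [inrad_eq_sSup_subsetT K C] at hpos ⊢
  rw [inrad_eq_sSup_subsetT K D]
  -- an unbounded set would have junk supremum `0`
  have hbdd : BddAbove {ρ : ℝ | 0 ≤ ρ ∧ SubsetT (ρ • C) K} := by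
    by_contra hunb
    rw [Real.sSup_of_not_bddAbove hunb] at hpos
    exact hpos.false
  refine Real.sSup_le (fun ρ ⟨hρ, hD⟩ => ?_) (by positivity)
  rw [← div_le_iff₀' ha]
  exact le_csSup hbdd ⟨div_nonneg hρ ha.le, h ρ hD⟩

section Transfer

variable {K C : Set (Fin n → ℝ)} {a : ℝ}

theorem SubsetT.mul_smul_neg_of_neg_right (hC : SubsetT (-C) (a • C)) {b : ℝ}
    (h : SubsetT K (b • C)) : SubsetT K ((a * b) • -C) := by
  have hC' : SubsetT C (a • -C) := by simpa only [neg_neg, Set.smul_set_neg] using hC.neg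
  simpa only [smul_smul, mul_comm b a] using h.trans (hC'.smul b)

theorem SubsetT.mul_smul_neg_of_neg_left (hK : SubsetT (-K) (a • K)) {b : ℝ}
    (h : SubsetT K (b • C)) : SubsetT K ((a * b) • -C) := by
  simpa only [neg_neg, smul_smul, Set.smul_set_neg] using (hK.trans (h.smul a)).neg

theorem SubsetT.div_smul_of_neg_right (hC : SubsetT (-C) (a • C)) (ha : 0 < a) {ρ : ℝ}
    (h : SubsetT (ρ • -C) K) : SubsetT ((ρ / a) • C) K := by
  have hC' : SubsetT C (a • -C) := by simpa only [neg_neg, Set.smul_set_neg] using hC.neg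
  have hscale : (ρ / a) • a • -C = ρ • -C := by rw [smul_smul, div_mul_cancel₀ _ ha.ne']
  exact (hscale ▸ hC'.smul (ρ / a)).trans h

theorem SubsetT.div_smul_of_neg_left (hK : SubsetT (-K) (a • K)) (ha : 0 < a) {ρ : ℝ}
    (h : SubsetT (ρ • -C) K) : SubsetT ((ρ / a) • C) K := by
  have hρC : SubsetT (ρ • C) (a • K) := by
    simpa only [neg_neg, Set.smul_set_neg] using h.neg.trans hK
  have hscale : a⁻¹ • a • K = K := by rw [smul_smul, inv_mul_cancel₀ ha.ne', one_smul]
  simpa only [smul_smul, div_eq_inv_mul, hscale] using hρC.smul a⁻¹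

end Transfer

theorem div_le_asym {X : Set (Fin n → ℝ)} {x y : ℝ}
    (hne : {a : ℝ | 0 < a ∧ SubsetT (-X) (a • X)}.Nonempty) (hy : 0 ≤ y)
    (h : 0 < y → ∀ a > 0, SubsetT (-X) (a • X) → x ≤ a * y) : x / y ≤ asym X := by
  rcases hy.eq_or_lt with rfl | hy
  · rw [div_zero]
    exact circR_nonneg _ _
  · exact le_csInf hne fun a ⟨ha, hX⟩ => (div_le_iff₀ hy).2 (h hy a ha hX)

end

theorem stmt3 {n : ℕ} (K C : Set (Fin n → ℝ)) (hK : IsBody K) (hC : IsBody C) :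
    max (inrad K (-C) / inrad K C) (circR K (-C) / circR K C) ≤ min (asym K) (asym C) := by
  obtain ⟨-, hKc, hKi⟩ := hK
  obtain ⟨-, hCc, hCi⟩ := hC
  have hKC := nonempty_circR_set hKc.isBounded hCi
  have hsK := nonempty_circR_set hKc.isBounded.neg hKi
  have hsC := nonempty_circR_set hCc.isBounded.neg hCi
  refine max_le (le_min ?_ ?_) (le_min ?_ ?_)
  · exact div_le_asym hsK (inrad_nonneg K C) fun hpos a ha hX =>
      inrad_le_mul ha hpos fun _ => hX.div_smul_of_neg_left ha
  · exact div_le_asym hsC (inrad_nonneg K C) fun hpos a ha hX =>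
      inrad_le_mul ha hpos fun _ => hX.div_smul_of_neg_right ha
  · exact div_le_asym hsK (circR_nonneg K C) fun _ a ha hX =>
      circR_le_mul ha hKC fun _ => hX.mul_smul_neg_of_neg_left
  · exact div_le_asym hsC (circR_nonneg K C) fun _ a ha hX =>
      circR_le_mul ha hKC fun _ => hX.mul_smul_neg_of_neg_right
end

section
/- For convex bodies K, C in R^n, s(C) ≥ R(K,C)·r(K,C−C) / ( r(K,C)·R(K,C−C) ). -/
open Pointwise

/-! If `-C ⊆ t + σ • C`, convexity gives `C - C ⊆ t + (1 + σ) • C`, and solving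
`-c = t + σ • c'` for `c` gives `C ⊆ t' + (σ / (1 + σ)) • (C - C)`. By monotonicity of
circumradius and inradius under such inclusions, `R(K, C) ≤ (1 + σ) R(K, C - C)` and
`r(K, C - C) ≤ σ / (1 + σ) r(K, C)`; multiplying,
`R(K, C) r(K, C - C) ≤ σ r(K, C) R(K, C - C)`, and `s(C)` is the infimum of such `σ`. -/

open Bornology Topology

theorem Set.smul_vadd_set_distrib {M E : Type*} [AddMonoid E] [DistribSMul M E] (a : M) (t : E)
    (s : Set E) : a • (t +ᵥ s) = a • t +ᵥ a • s := by
  simp only [← Set.image_vadd, ← Set.image_smul, Set.image_image, smul_add, vadd_eq_add]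

section ConvexGeometry

variable {E : Type*}

theorem exists_subset_vadd_smul_of_isBounded [NormedAddCommGroup E] [NormedSpace ℝ E]
    {K C : Set E} (hK : IsBounded K) (hC : (interior C).Nonempty) :
    ∃ ρ : ℝ, 0 < ρ ∧ ∃ t : E, K ⊆ t +ᵥ ρ • C := by
  obtain ⟨c, hc⟩ := hC
  have hV : (· + c) ⁻¹' C ∈ 𝓝 (0 : E) :=
    (continuous_add_const c).continuousAt.preimage_mem_nhds
      (by simpa using mem_interior_iff_mem_nhds.1 hc)
  obtain ⟨ρ, hρ, hK⟩ := ((NormedSpace.isVonNBounded_iff ℝ).2 hK hV).exists_pos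
  refine ⟨ρ, hρ, -(ρ • c), fun x hx => ?_⟩
  obtain ⟨v, hv, rfl⟩ := hK ρ (le_abs_self ρ) hx
  exact ⟨ρ • (v + c), Set.smul_mem_smul_set hv, by simp only [vadd_eq_add, smul_add]; abel⟩

variable [AddCommGroup E] [Module ℝ E] {C : Set E} {σ : ℝ} {t : E}

theorem sub_subset_vadd_smul_of_neg_subset (hC : Convex ℝ C) (hσ : 0 ≤ σ)
    (h : -C ⊆ t +ᵥ σ • C) : C - C ⊆ t +ᵥ (1 + σ) • C := by
  rintro _ ⟨a, ha, b, hb, rfl⟩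
  obtain ⟨_, ⟨c, hc, rfl⟩, hbc : t + σ • c = -b⟩ := h (Set.neg_mem_neg.2 hb)
  rw [hC.add_smul zero_le_one hσ, one_smul]
  refine ⟨a + σ • c, Set.add_mem_add ha (Set.smul_mem_smul_set hc), ?_⟩
  show t + (a + σ • c) = a - b
  rw [sub_eq_add_neg, ← hbc]
  abel

theorem subset_vadd_smul_sub_of_neg_subset (hσ : 0 < σ) (h : -C ⊆ t +ᵥ σ • C) :
    C ⊆ -(1 + σ)⁻¹ • t +ᵥ (σ / (1 + σ)) • (C - C) := by
  intro c hc
  obtain ⟨_, ⟨c', hc', rfl⟩, hcc' : t + σ • c' = -c⟩ := h (Set.neg_mem_neg.2 hc)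
  refine ⟨(σ / (1 + σ)) • (c - c'), Set.smul_mem_smul_set (Set.sub_mem_sub hc hc'), ?_⟩
  have h1σ : 1 + σ ≠ 0 := by positivity
  show -(1 + σ)⁻¹ • t + (σ / (1 + σ)) • (c - c') = c
  linear_combination (norm := skip) (-(1 + σ)⁻¹) • hcc'
  match_scalars <;> field_simp <;> ring

end ConvexGeometry

section Radii

variable {n : ℕ}

-- The sets whose `sInf` and `sSup` are `circR K C` and `inrad K C`.
def circRadii (K C : Set (Fin n → ℝ)) : Set ℝ :=
  {ρ | 0 < ρ ∧ ∃ t : Fin n → ℝ, K ⊆ t +ᵥ ρ • C}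

def inRadii (K C : Set (Fin n → ℝ)) : Set ℝ :=
  {ρ | 0 ≤ ρ ∧ ∃ t : Fin n → ℝ, t +ᵥ ρ • C ⊆ K}

variable {K A B : Set (Fin n → ℝ)} {μ : ℝ} {t : Fin n → ℝ}

theorem circR_nonneg_s4 : 0 ≤ circR K A := Real.sInf_nonneg fun _ h => h.1.le

theorem inrad_nonneg_s4 : 0 ≤ inrad K A := Real.sSup_nonneg fun _ h => h.1

theorem circRadii_nonempty (hK : IsBounded K) (hA : (interior A).Nonempty) :
    (circRadii K A).Nonempty :=
  let ⟨ρ, hρ, hKA⟩ := exists_subset_vadd_smul_of_isBounded hK hA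
  ⟨ρ, hρ, hKA⟩

theorem circR_le_mul_circR_of_subset (hμ : 0 < μ) (hAB : A ⊆ t +ᵥ μ • B)
    (hA : (circRadii K A).Nonempty) : circR K B ≤ μ * circR K A := by
  rw [mul_comm, ← div_le_iff₀ hμ]
  refine le_csInf hA fun ρ ⟨hρ, u, hKA⟩ => (div_le_iff₀ hμ).2 ?_
  refine csInf_le ⟨0, fun _ h => h.1.le⟩ ⟨by positivity, u + ρ • t, ?_⟩
  calc K ⊆ u +ᵥ ρ • A := hKA
    _ ⊆ u +ᵥ ρ • (t +ᵥ μ • B) := Set.vadd_set_mono (Set.smul_set_mono hAB)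
    _ = (u + ρ • t) +ᵥ (ρ * μ) • B := by
      rw [Set.smul_vadd_set_distrib, smul_smul, vadd_vadd]

theorem inrad_le_mul_inrad_of_subset (hμ : 0 < μ) (hBA : B ⊆ t +ᵥ μ • A)
    (hB : BddAbove (inRadii K B)) : inrad K A ≤ μ * inrad K B := by
  refine Real.sSup_le (fun ρ ⟨hρ, u, hAK⟩ => ?_) (mul_nonneg hμ.le inrad_nonneg_s4)
  rw [mul_comm, ← div_le_iff₀ hμ]
  refine le_csSup hB ⟨by positivity, u - (ρ / μ) • t, ?_⟩
  calc (u - (ρ / μ) • t) +ᵥ (ρ / μ) • B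
        ⊆ (u - (ρ / μ) • t) +ᵥ (ρ / μ) • (t +ᵥ μ • A) :=
          Set.vadd_set_mono (Set.smul_set_mono hBA)
    _ = u +ᵥ ρ • A := by
      rw [Set.smul_vadd_set_distrib, smul_smul, div_mul_cancel₀ ρ hμ.ne', vadd_vadd,
        sub_add_cancel]
    _ ⊆ K := hAK

end Radii

theorem stmt4 {n : ℕ} (K C : Set (Fin n → ℝ)) (hK : IsBody K) (hC : IsBody C) :
    circR K C * inrad K (C - C) / (inrad K C * circR K (C - C)) ≤ asym C := by
  obtain ⟨-, hKcomp, -⟩ := hK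
  obtain ⟨hCconv, hCcomp, hCint⟩ := hC
  by_cases hbdd : BddAbove (inRadii K C)
  swap
  · -- an unbounded `sSup` is `0`, and so is the quotient
    have hr : inrad K C = 0 := Real.sSup_of_not_bddAbove hbdd
    rw [hr, zero_mul, div_zero]
    exact circR_nonneg_s4
  have hCC : (interior (C - C)).Nonempty :=
    (hCint.sub (hCint.mono interior_subset)).mono subset_interior_sub_left
  refine le_csInf (circRadii_nonempty hCcomp.isBounded.neg hCint) fun σ ⟨hσ, t, hneg⟩ => ?_
  have hR : circR K C ≤ (1 + σ) * circR K (C - C) :=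
    circR_le_mul_circR_of_subset (by positivity)
      (sub_subset_vadd_smul_of_neg_subset hCconv hσ.le hneg)
      (circRadii_nonempty hKcomp.isBounded hCC)
  have hr : inrad K (C - C) ≤ σ / (1 + σ) * inrad K C :=
    inrad_le_mul_inrad_of_subset (by positivity) (subset_vadd_smul_sub_of_neg_subset hσ hneg) hbdd
  refine div_le_of_le_mul₀ (mul_nonneg inrad_nonneg_s4 circR_nonneg_s4) hσ.le ?_
  calc circR K C * inrad K (C - C)
      ≤ ((1 + σ) * circR K (C - C)) * (σ / (1 + σ) * inrad K C) :=
        mul_le_mul hR hr inrad_nonneg_s4 (mul_nonneg (by positivity) circR_nonneg_s4)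
    _ = σ * (inrad K C * circR K (C - C)) := by field_simp
end
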